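/- arXiv:2501.12626 — 2 statements merged into one kernel-verified Lean document; each statement's English description precedes it below -/
import Mathlib

section
/- Let Q = Qᵀ, S, R = Rᵀ > 0 with Q + SR⁻¹Sᵀ ⪰ 0. Then for a given v₁, the set of all v₂ satisfying v₁ᵀQv₁ + 2v₁ᵀSv₂ − v₂ᵀRv₂ ≥ 0 is exactly { R^{-1/2}U(Q + SR⁻¹Sᵀ)^{1/2}v₁ + R⁻¹Sᵀv₁ : U ∈ ℝ^{m×m}, UᵀU ⪯ I }, where the square roots are the positive semidefinite matrix square roots. -/
/-!
Completing the square with `T = R^{1/2}` and `M = (Q + SR⁻¹Sᵀ)^{1/2}` writes the quadratic as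
`‖M v₁‖² - ‖T v₂ - T⁻¹Sᵀv₁‖²`. Hence `v₂` is a solution iff `w = T v₂ - T⁻¹Sᵀv₁` is no longer
than `b = M v₁`, and the vectors `w` with `‖w‖ ≤ ‖b‖` are exactly the images `U b` of `b` under
contractions `U` (the rank-one `U = w bᵀ / ‖b‖²` realizes a given `w`). Solving `U b = w` for `v₂`
gives the parametrization.
-/

open Matrix

open scoped ComplexOrder in
/-- The positive semidefinite square root of a positive semidefinite matrix
(the definition `Matrix.PosSemidef.sqrt` of the older Mathlib, removed since). -/
noncomputable def Matrix.PosSemidef.sqrt {n 𝕜 : Type*} [Fintype n] [DecidableEq n] [RCLike 𝕜]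
    {A : Matrix n n 𝕜} (hA : A.PosSemidef) : Matrix n n 𝕜 :=
  (hA.1.eigenvectorUnitary : Matrix n n 𝕜) *
    diagonal ((fun x : ℝ => (x : 𝕜)) ∘ (√·) ∘ hA.1.eigenvalues) *
    (star hA.1.eigenvectorUnitary : Matrix n n 𝕜)

namespace Matrix.PosSemidef

open scoped ComplexOrder

variable {n 𝕜 : Type*} [Fintype n] [DecidableEq n] [RCLike 𝕜] {A : Matrix n n 𝕜}

lemma sqrt_mul_self (hA : A.PosSemidef) : hA.sqrt * hA.sqrt = A := by
  have hdiag : diagonal ((fun x : ℝ => (x : 𝕜)) ∘ (√·) ∘ hA.1.eigenvalues) *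
      diagonal ((fun x : ℝ => (x : 𝕜)) ∘ (√·) ∘ hA.1.eigenvalues) =
      diagonal (RCLike.ofReal ∘ hA.1.eigenvalues) := by
    rw [diagonal_mul_diagonal]
    congr with i
    simp [← RCLike.ofReal_mul, Real.mul_self_sqrt (hA.eigenvalues_nonneg i)]
  conv_rhs => rw [hA.1.spectral_theorem, ← hdiag, map_mul]
  -- `sqrt` unfolds to the conjugate of the diagonal of `√λᵢ` by the eigenvector unitary
  rfl

lemma posSemidef_sqrt (hA : A.PosSemidef) : hA.sqrt.PosSemidef := by
  rw [sqrt, star_eq_conjTranspose]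
  exact (PosSemidef.diagonal fun i => by simp [Real.sqrt_nonneg]).mul_mul_conjTranspose_same _

lemma isSymm_sqrt {A : Matrix n n ℝ} (hA : A.PosSemidef) : hA.sqrt.IsSymm :=
  isHermitian_iff_isSymm.mp hA.posSemidef_sqrt.isHermitian

end Matrix.PosSemidef

lemma Matrix.PosDef.isUnit_det_sqrt {n : Type*} [Fintype n] [DecidableEq n]
    {A : Matrix n n ℝ} (hA : A.PosDef) : IsUnit hA.posSemidef.sqrt.det := by
  apply isUnit_of_mul_isUnit_left (y := hA.posSemidef.sqrt.det)
  rw [← det_mul, hA.posSemidef.sqrt_mul_self]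
  exact hA.det_pos.ne'.isUnit

namespace Matrix

variable {ι κ ν : Type*} [Fintype ι] [Fintype κ] [Fintype ν]

lemma mulVec_dotProduct_mulVec {R : Type*} [CommSemiring R]
    (A : Matrix κ ι R) (B : Matrix κ ν R) (x : ι → R) (y : ν → R) :
    (A *ᵥ x) ⬝ᵥ (B *ᵥ y) = x ⬝ᵥ ((Aᵀ * B) *ᵥ y) := by
  rw [dotProduct_mulVec, dotProduct_mulVec, ← vecMul_vecMul, vecMul_transpose]

lemma dotProduct_self_nonneg {R : Type*} [Ring R] [LinearOrder R] [IsStrictOrderedRing R]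
    (v : ι → R) : 0 ≤ v ⬝ᵥ v :=
  Finset.sum_nonneg fun i _ => mul_self_nonneg (v i)

lemma posSemidef_one_sub_transpose_mul_self_iff [DecidableEq ι] (U : Matrix κ ι ℝ) :
    (1 - Uᵀ * U).PosSemidef ↔ ∀ x, (U *ᵥ x) ⬝ᵥ (U *ᵥ x) ≤ x ⬝ᵥ x := by
  have hherm : (1 - Uᵀ * U).IsHermitian := by
    refine isHermitian_one.sub ?_
    simpa [conjTranspose_eq_transpose_of_trivial] using isHermitian_conjTranspose_mul_self U
  simp only [posSemidef_iff_dotProduct_mulVec, hherm, true_and, star_trivial, sub_mulVec,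
    one_mulVec, dotProduct_sub, ← mulVec_dotProduct_mulVec, sub_nonneg]

lemma exists_contraction_mulVec_eq_iff [DecidableEq ι] (a : κ → ℝ) (b : ι → ℝ) :
    (∃ U : Matrix κ ι ℝ, (1 - Uᵀ * U).PosSemidef ∧ U *ᵥ b = a) ↔ a ⬝ᵥ a ≤ b ⬝ᵥ b := by
  simp only [posSemidef_one_sub_transpose_mul_self_iff]
  constructor
  · rintro ⟨U, hU, rfl⟩
    exact hU b
  intro hab
  rcases (dotProduct_self_nonneg b).eq_or_lt with hb | hb
  · have ha : a = 0 :=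
      dotProduct_self_eq_zero.mp (le_antisymm (hb ▸ hab) (dotProduct_self_nonneg a))
    refine ⟨0, fun x => by simpa using dotProduct_self_nonneg x, ?_⟩
    simp [ha]
  have cauchy_schwarz (x : ι → ℝ) : (b ⬝ᵥ x) ^ 2 ≤ (b ⬝ᵥ b) * (x ⬝ᵥ x) := by
    simpa [dotProduct, pow_two] using Finset.sum_mul_sq_le_sq_mul_sq Finset.univ b x
  set c := b ⬝ᵥ b
  have hUx (x : ι → ℝ) : ((c⁻¹ • vecMulVec a b) *ᵥ x) = (c⁻¹ * (b ⬝ᵥ x)) • a := by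
    rw [smul_mulVec, vecMulVec_mulVec, op_smul_eq_smul, smul_smul]
  refine ⟨c⁻¹ • vecMulVec a b, fun x => ?_, by rw [hUx, inv_mul_cancel₀ hb.ne', one_smul]⟩
  rw [hUx, smul_dotProduct, dotProduct_smul, smul_eq_mul, smul_eq_mul, ← mul_assoc, ← sq]
  calc (c⁻¹ * (b ⬝ᵥ x)) ^ 2 * (a ⬝ᵥ a) ≤ (c⁻¹ * (b ⬝ᵥ x)) ^ 2 * c := by gcongr
    _ = (b ⬝ᵥ x) ^ 2 / c := by field_simp
    _ ≤ x ⬝ᵥ x := by rw [div_le_iff₀' hb]; exact cauchy_schwarz x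

lemma eq_mulVec_sub_inv_mulVec_iff {K : Type*} [DecidableEq κ] [CommRing K]
    {T : Matrix κ κ K} (hT : IsUnit T.det) (w z v : κ → K) :
    w = T *ᵥ v - T⁻¹ *ᵥ z ↔ v = T⁻¹ *ᵥ w + (T * T)⁻¹ *ᵥ z := by
  rw [mul_inv_rev, ← mulVec_mulVec, ← mulVec_add, eq_sub_iff_add_eq]
  constructor <;> intro h
  · rw [h, mulVec_mulVec, nonsing_inv_mul _ hT, one_mulVec]
  · rw [h, mulVec_mulVec, mul_nonsing_inv _ hT, one_mulVec]

lemma quadratic_eq_dotProduct_self_sub_dotProduct_self [DecidableEq κ] {Q : Matrix ι ι ℝ}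
    {S : Matrix ι κ ℝ} {R T : Matrix κ κ ℝ} {M : Matrix ν ι ℝ} (hT : T.IsSymm)
    (hTR : T * T = R) (hTdet : IsUnit T.det) (hM : Mᵀ * M = Q + S * R⁻¹ * Sᵀ)
    (v₁ : ι → ℝ) (v₂ : κ → ℝ) :
    v₁ ⬝ᵥ (Q *ᵥ v₁) + 2 * (v₁ ⬝ᵥ (S *ᵥ v₂)) - v₂ ⬝ᵥ (R *ᵥ v₂) =
      (M *ᵥ v₁) ⬝ᵥ (M *ᵥ v₁) -
        (T *ᵥ v₂ - T⁻¹ *ᵥ (Sᵀ *ᵥ v₁)) ⬝ᵥ (T *ᵥ v₂ - T⁻¹ *ᵥ (Sᵀ *ᵥ v₁)) := by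
  have hRinv : R⁻¹ = (T⁻¹)ᵀ * T⁻¹ := by rw [← hTR, mul_inv_rev, transpose_nonsing_inv, hT.eq]
  have hMv : (M *ᵥ v₁) ⬝ᵥ (M *ᵥ v₁) =
      v₁ ⬝ᵥ (Q *ᵥ v₁) + (T⁻¹ *ᵥ (Sᵀ *ᵥ v₁)) ⬝ᵥ (T⁻¹ *ᵥ (Sᵀ *ᵥ v₁)) := by
    rw [mulVec_dotProduct_mulVec, hM, add_mulVec, dotProduct_add, mulVec_dotProduct_mulVec,
      hRinv, mulVec_dotProduct_mulVec, transpose_transpose, mulVec_mulVec]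
  have hTv : (T *ᵥ v₂) ⬝ᵥ (T *ᵥ v₂) = v₂ ⬝ᵥ (R *ᵥ v₂) := by
    rw [mulVec_dotProduct_mulVec, hT.eq, hTR]
  have hcross : (T *ᵥ v₂) ⬝ᵥ (T⁻¹ *ᵥ (Sᵀ *ᵥ v₁)) = v₁ ⬝ᵥ (S *ᵥ v₂) := by
    rw [mulVec_dotProduct_mulVec, hT.eq, mul_nonsing_inv _ hTdet, one_mulVec, dotProduct_mulVec,
      vecMul_transpose, dotProduct_comm]
  rw [dotProduct_sub, sub_dotProduct, sub_dotProduct,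
    dotProduct_comm (T⁻¹ *ᵥ (Sᵀ *ᵥ v₁)) (T *ᵥ v₂), hMv, hTv, hcross]
  ring

end Matrix

theorem quadratic_inequality_solution_set_general
    (n m : ℕ) (Q : Matrix (Fin n) (Fin n) ℝ) (S : Matrix (Fin n) (Fin m) ℝ)
    (R : Matrix (Fin m) (Fin m) ℝ) (hR : R.PosDef)
    (hQS : (Q + S * R⁻¹ * Sᵀ).PosSemidef) (v1 : Fin n → ℝ) :
    {v2 : Fin m → ℝ |
        0 ≤ v1 ⬝ᵥ (Q *ᵥ v1) + 2 * (v1 ⬝ᵥ (S *ᵥ v2)) - v2 ⬝ᵥ (R *ᵥ v2)} =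
      {v2 : Fin m → ℝ | ∃ U : Matrix (Fin m) (Fin n) ℝ,
        ((1 : Matrix (Fin n) (Fin n) ℝ) - Uᵀ * U).PosSemidef ∧
        v2 = (hR.posSemidef.sqrt)⁻¹ *ᵥ (U *ᵥ (hQS.sqrt *ᵥ v1)) + R⁻¹ *ᵥ (Sᵀ *ᵥ v1)} := by
  set T := hR.posSemidef.sqrt
  set M := hQS.sqrt
  have hTR : T * T = R := hR.posSemidef.sqrt_mul_self
  have hM : Mᵀ * M = Q + S * R⁻¹ * Sᵀ := by rw [hQS.isSymm_sqrt.eq, hQS.sqrt_mul_self]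
  ext v2
  have hsolve (w : Fin m → ℝ) :
      w = T *ᵥ v2 - T⁻¹ *ᵥ (Sᵀ *ᵥ v1) ↔ v2 = T⁻¹ *ᵥ w + R⁻¹ *ᵥ (Sᵀ *ᵥ v1) :=
    hTR ▸ eq_mulVec_sub_inv_mulVec_iff hR.isUnit_det_sqrt w _ v2
  simp only [Set.mem_ofPred_eq]
  rw [quadratic_eq_dotProduct_self_sub_dotProduct_self hR.posSemidef.isSymm_sqrt hTR
    hR.isUnit_det_sqrt hM, sub_nonneg, ← exists_contraction_mulVec_eq_iff]
  exact exists_congr fun U => and_congr_right' (hsolve _)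

/-- With `Q = Qᵀ`, `R = Rᵀ > 0`, and `Q + SR⁻¹Sᵀ ⪰ 0`, for a given `v₁`
the solution set of `v₁ᵀQv₁ + 2v₁ᵀSv₂ − v₂ᵀRv₂ ≥ 0` is exactly
`{ R^{-1/2} U (Q + SR⁻¹Sᵀ)^{1/2} v₁ + R⁻¹Sᵀv₁ : UᵀU ⪯ I }`.
(The contraction `U` maps `ℝⁿ` to `ℝᵐ`, so it is typed `m × n` with `UᵀU ⪯ Iₙ`.) -/
theorem quadratic_inequality_solution_set
    (n m : ℕ) (Q : Matrix (Fin n) (Fin n) ℝ) (S : Matrix (Fin n) (Fin m) ℝ)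
    (R : Matrix (Fin m) (Fin m) ℝ) (hQ : Q.IsSymm) (hR : R.PosDef)
    (hQS : (Q + S * R⁻¹ * Sᵀ).PosSemidef) (v1 : Fin n → ℝ) :
    {v2 : Fin m → ℝ |
        0 ≤ v1 ⬝ᵥ (Q *ᵥ v1) + 2 * (v1 ⬝ᵥ (S *ᵥ v2)) - v2 ⬝ᵥ (R *ᵥ v2)} =
      {v2 : Fin m → ℝ | ∃ U : Matrix (Fin m) (Fin n) ℝ,
        ((1 : Matrix (Fin n) (Fin n) ℝ) - Uᵀ * U).PosSemidef ∧
        v2 = (hR.posSemidef.sqrt)⁻¹ *ᵥ (U *ᵥ (hQS.sqrt *ᵥ v1)) + R⁻¹ *ᵥ (Sᵀ *ᵥ v1)} :=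
  quadratic_inequality_solution_set_general n m Q S R hR hQS v1
end

section
/- Let A ∈ ℝ^{n×n}, B ∈ ℝ^{n×m}, and suppose there is an invertible S ∈ ℝ^{n×n} with S⁻¹AS = [[A₁₁, A₁₂],[0, A₂₂]] and S⁻¹B = [B₁; 0], where the pair (A₁₁, B₁) is controllable. Then there exists K ∈ ℝ^{m×n} such that all eigenvalues of A + BK lie strictly inside the unit disk if and only if all eigenvalues of A₂₂ lie strictly inside the unit disk. -/
/-!
Conjugating by `S` turns `A + BK` into `[[A₁₁ + B₁K₁, *], [0, A₂₂]]`, where `[K₁ K₂] = KS`.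
Hence the spectrum of `A + BK` is that of `A₁₁ + B₁K₁` together with that of `A₂₂`, and the
latter part cannot be moved by feedback. Conversely, controllability of `(A₁₁, B₁)` yields a
deadbeat feedback `K₁`, i.e. one with `A₁₁ + B₁K₁` nilpotent, and then the spectrum of
`A + BK` is `{0} ∪ spec A₂₂`.

For a controllable pair `(A, B)`, deadbeat feedback is built on a growing subspace `W`, invariant
under `A + BF` and killed by a power of it. If `W ≠ ⊤`, some `y ∉ W` has `Ay ∈ W + im B`, and
choosing `F y` to cancel the `im B` part enlarges `W`. Such a `y` exists because a subspace with
`A⁻¹(W + im B) ⊆ W` contains every state that can be steered to `0`, which by controllability is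
every state.
-/

open Matrix

/-- The controllability matrix `[B, AB, …, A^{r−1}B]` of a pair `(A, B)`. -/
noncomputable def ctrbMatrix (r m : ℕ) (A : Matrix (Fin r) (Fin r) ℝ)
    (B : Matrix (Fin r) (Fin m) ℝ) : Matrix (Fin r) (Fin r × Fin m) ℝ :=
  Matrix.of fun i jp => (A ^ (jp.1 : ℕ) * B) i jp.2

namespace LinearMap

open Submodule

variable {K V U : Type*} [Field K] [AddCommGroup V] [Module K V] [AddCommGroup U] [Module K U]
  (A : Module.End K V) (B : U →ₗ[K] V)

def reachableIn : ℕ → Submodule K V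
  | 0 => ⊥
  | k + 1 => reachableIn k ⊔ (range B).map (A ^ k)

variable {A B}

theorem comap_pow_reachableIn_le {S : Submodule K V} (hS : (S ⊔ range B).comap A ≤ S) :
    ∀ k, (reachableIn A B k).comap (A ^ k) ≤ S
  | 0 => fun x hx => (by simpa [reachableIn] using hx : x = 0) ▸ S.zero_mem
  | k + 1 => fun x hx => by
    obtain ⟨z, hz, _, ⟨_, ⟨v, rfl⟩, rfl⟩, hzv⟩ := mem_sup.1 hx
    refine hS (mem_sup.2 ⟨A x - B v, comap_pow_reachableIn_le hS k ?_, B v, mem_range_self B v,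
      sub_add_cancel _ _⟩)
    rw [mem_comap, map_sub, ← Module.End.mul_apply, ← pow_succ, ← hzv, add_sub_cancel_right]
    exact hz

theorem eq_top_of_comap_sup_range_le {n : ℕ} (hc : reachableIn A B n = ⊤) {S : Submodule K V}
    (hS : (S ⊔ range B).comap A ≤ S) : S = ⊤ := by
  simpa [hc] using comap_pow_reachableIn_le hS n

def IsNilpotentOn (N : Module.End K V) (S : Submodule K V) : Prop :=
  S ≤ S.comap N ∧ ∃ n, S ≤ ker (N ^ n)

theorem IsNilpotentOn.of_eqOn_of_mapsTo {N N' : Module.End K V} {S T : Submodule K V}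
    (h : IsNilpotentOn N S) (heq : ∀ x ∈ S, N' x = N x) (hST : S ≤ T)
    (hmaps : ∀ x ∈ T, N' x ∈ S) : IsNilpotentOn N' T := by
  obtain ⟨hinv, n, hn⟩ := h
  have hpow : ∀ k, ∀ x ∈ S, (N' ^ k) x = (N ^ k) x := by
    intro k
    induction k with
    | zero => simp
    | succ k ih =>
      intro x hx
      rw [pow_succ, pow_succ, Module.End.mul_apply, Module.End.mul_apply, heq x hx,
        ih _ (hinv hx)]
  refine ⟨fun x hx => hST (hmaps x hx), n + 1, fun x hx => ?_⟩
  rw [mem_ker, pow_succ, Module.End.mul_apply, hpow n _ (hmaps x hx)]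
  exact hn (hmaps x hx)

theorem IsNilpotentOn.exists_sup_span_singleton {F : V →ₗ[K] U} {S : Submodule K V}
    (hF : IsNilpotentOn (A + B ∘ₗ F) S) {y : V} (hyS : y ∉ S) (hyA : A y ∈ S ⊔ range B) :
    ∃ F' : V →ₗ[K] U, IsNilpotentOn (A + B ∘ₗ F') (S ⊔ K ∙ y) := by
  obtain ⟨s, hs, _, ⟨u, rfl⟩, hsu⟩ := mem_sup.1 hyA
  obtain ⟨F', hF'S, hF'y⟩ := exists_extend_of_notMem (F ∘ₗ S.subtype) hyS (-u)
  have heq : ∀ x ∈ S, (A + B ∘ₗ F') x = (A + B ∘ₗ F) x := fun x hx => by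
    simpa using congr(A x + B ($hF'S ⟨x, hx⟩))
  have hy : (A + B ∘ₗ F') y = s := by simp [hF'y, ← hsu]
  refine ⟨F', hF.of_eqOn_of_mapsTo heq le_sup_left fun _ hxy => ?_⟩
  obtain ⟨x, hx, z, hz, rfl⟩ := mem_sup.1 hxy
  obtain ⟨c, rfl⟩ := mem_span_singleton.1 hz
  rw [map_add, map_smul, hy, heq x hx]
  exact S.add_mem (hF.1 hx) (S.smul_mem c hs)

theorem exists_isNilpotent_add_comp_of_reachableIn_eq_top [FiniteDimensional K V] {n : ℕ}
    (hc : reachableIn A B n = ⊤) : ∃ F : V →ₗ[K] U, IsNilpotent (A + B ∘ₗ F) := by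
  suffices ∀ S : Submodule K V, (∃ F, IsNilpotentOn (A + B ∘ₗ F) S) →
      ∃ F : V →ₗ[K] U, IsNilpotent (A + B ∘ₗ F) from
    this ⊥ ⟨0, by simp [IsNilpotentOn]⟩
  intro S
  induction S using WellFoundedGT.induction with
  | _ S ih =>
    rintro ⟨F, hF⟩
    by_cases hS : S = ⊤
    · obtain ⟨-, n, hn⟩ := hF
      exact ⟨F, n, by rwa [hS, top_le_iff, ker_eq_top] at hn⟩
    · obtain ⟨y, hyA, hyS⟩ : ∃ y, A y ∈ S ⊔ range B ∧ y ∉ S := by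
        by_contra! h
        exact hS (eq_top_of_comap_sup_range_le hc h)
      exact ih _ (left_lt_sup.2 fun h => hyS (h (mem_span_singleton_self y)))
        (hF.exists_sup_span_singleton hyS hyA)

end LinearMap

section Controllability

variable {r m : ℕ} {A : Matrix (Fin r) (Fin r) ℝ} {B : Matrix (Fin r) (Fin m) ℝ}

theorem reachableIn_toLin'_eq_top_of_rank_ctrbMatrix (hctrb : (ctrbMatrix r m A B).rank = r) :
    LinearMap.reachableIn (toLin' A) (toLin' B) r = ⊤ := by
  have hmono : Monotone (LinearMap.reachableIn (toLin' A) (toLin' B)) :=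
    monotone_nat_of_le_succ fun _ => le_sup_left
  have hrange : LinearMap.range (ctrbMatrix r m A B).mulVecLin = ⊤ :=
    Submodule.eq_top_of_finrank_eq (by rwa [Module.finrank_fin_fun])
  rw [eq_top_iff, ← hrange, Matrix.range_mulVecLin, Submodule.span_le]
  rintro _ ⟨⟨i, j⟩, rfl⟩
  refine hmono i.isLt (le_sup_right (a := LinearMap.reachableIn (toLin' A) (toLin' B) i)
    ⟨B *ᵥ Pi.single j 1, ⟨_, rfl⟩, ?_⟩)
  ext
  simp [ctrbMatrix, ← toLin'_pow, mulVec, dotProduct, mul_apply]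

theorem exists_isNilpotent_add_mul_of_rank_ctrbMatrix (hctrb : (ctrbMatrix r m A B).rank = r) :
    ∃ K : Matrix (Fin m) (Fin r) ℝ, IsNilpotent (A + B * K) := by
  obtain ⟨F, hF⟩ := LinearMap.exists_isNilpotent_add_comp_of_reachableIn_eq_top
    (reachableIn_toLin'_eq_top_of_rank_ctrbMatrix hctrb)
  refine ⟨LinearMap.toMatrix' F, ?_⟩
  have hlin : toLinAlgEquiv' (A + B * LinearMap.toMatrix' F) = toLin' A + toLin' B ∘ₗ F := by
    refine LinearMap.ext fun v => ?_
    simp [← mulVec_mulVec]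
  rwa [← IsNilpotent.map_iff toLinAlgEquiv'.injective, hlin]

end Controllability

theorem spectrum.eq_zero_of_isNilpotent {K A : Type*} [Field K] [Ring A] [Algebra K A]
    {a : A} (ha : IsNilpotent a) {μ : K} (hμ : μ ∈ spectrum K a) : μ = 0 := by
  by_contra hμ0
  refine spectrum.mem_iff.1 hμ ?_
  rw [sub_eq_add_neg]
  exact ha.neg.isUnit_add_left_of_commute ((IsUnit.mk0 μ hμ0).map (algebraMap K A))
    (Algebra.commute_algebraMap_right μ (-a))

namespace Matrix

variable {ι κ μ : Type*} [Fintype ι] [DecidableEq ι] [Fintype κ] [DecidableEq κ] [Fintype μ]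

theorem spectrum_fromBlocks_zero₂₁ {K : Type*} [Field K] (A₁₁ : Matrix ι ι K)
    (A₁₂ : Matrix ι κ K) (A₂₂ : Matrix κ κ K) :
    spectrum K (fromBlocks A₁₁ A₁₂ 0 A₂₂) = spectrum K A₁₁ ∪ spectrum K A₂₂ := by
  ext
  simp [mem_spectrum_iff_isRoot_charpoly, charpoly_fromBlocks_zero₂₁]

theorem spectrum_map_conj {R S : Type*} [CommRing R] [CommRing S] (f : R →+* S)
    {P : Matrix ι ι R} (hP : IsUnit P.det) (M : Matrix ι ι R) :
    spectrum S ((P * M * P⁻¹).map f) = spectrum S (M.map f) := by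
  lift P to (Matrix ι ι R)ˣ using (isUnit_iff_isUnit_det P).2 hP with u
  rw [← coe_units_inv]
  set v : (Matrix ι ι S)ˣ := Units.map f.mapMatrix.toMonoidHom u
  have hmap : ((u : Matrix ι ι R) * M * (u⁻¹ : (Matrix ι ι R)ˣ)).map f
      = (v : Matrix ι ι S) * M.map f * (v⁻¹ : (Matrix ι ι S)ˣ) := by
    rw [Matrix.map_mul, Matrix.map_mul]
    rfl
  rw [hmap, spectrum.units_conjugate]

variable {R : Type*} [CommRing R] {P A : Matrix (ι ⊕ κ) (ι ⊕ κ) R} {B : Matrix (ι ⊕ κ) μ R}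
  {A₁₁ : Matrix ι ι R} {A₁₂ : Matrix ι κ R} {A₂₂ : Matrix κ κ R} {B₁ : Matrix ι μ R}

theorem inv_mul_add_mul_mul_eq_fromBlocks (hA : P⁻¹ * A * P = fromBlocks A₁₁ A₁₂ 0 A₂₂)
    (hB : P⁻¹ * B = fromRows B₁ 0) (K : Matrix μ (ι ⊕ κ) R) :
    P⁻¹ * (A + B * K) * P
      = fromBlocks (A₁₁ + B₁ * (K * P).toCols₁) (A₁₂ + B₁ * (K * P).toCols₂) 0 A₂₂ := by
  have hBK : P⁻¹ * (B * K) * P = P⁻¹ * B * (K * P) := by simp only [Matrix.mul_assoc]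
  rw [Matrix.mul_add, Matrix.add_mul, hA, hBK, hB, ← fromCols_toCols (K * P),
    fromRows_mul_fromCols, fromBlocks_add]
  simp

theorem spectrum_map_add_mul_of_conj_eq_fromBlocks {S : Type*} [Field S] (f : R →+* S)
    (hP : IsUnit P.det) (hA : P⁻¹ * A * P = fromBlocks A₁₁ A₁₂ 0 A₂₂)
    (hB : P⁻¹ * B = fromRows B₁ 0) (K : Matrix μ (ι ⊕ κ) R) :
    spectrum S ((A + B * K).map f)
      = spectrum S ((A₁₁ + B₁ * (K * P).toCols₁).map f) ∪ spectrum S (A₂₂.map f) := by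
  have hconj : A + B * K = P * (P⁻¹ * (A + B * K) * P) * P⁻¹ := by
    simp only [← Matrix.mul_assoc, mul_nonsing_inv _ hP, Matrix.one_mul]
    simp only [Matrix.mul_assoc, mul_nonsing_inv _ hP, Matrix.mul_one]
  rw [hconj, spectrum_map_conj f hP, inv_mul_add_mul_mul_eq_fromBlocks hA hB, fromBlocks_map,
    Matrix.map_zero _ (map_zero f), spectrum_fromBlocks_zero₂₁]

end Matrix

/-- Proposition 2: If `S⁻¹AS = [[A₁₁, A₁₂],[0, A₂₂]]` and
`S⁻¹B = [B₁; 0]` with `(A₁₁, B₁)` controllable, then `A + BK` can be made Schur stable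
by some `K` iff all eigenvalues of `A₂₂` lie strictly inside the unit disk. -/
theorem stabilizable_iff_uncontrollable_part_stable
    (r s m : ℕ)
    (A Sm : Matrix (Fin r ⊕ Fin s) (Fin r ⊕ Fin s) ℝ)
    (B : Matrix (Fin r ⊕ Fin s) (Fin m) ℝ)
    (A11 : Matrix (Fin r) (Fin r) ℝ) (A12 : Matrix (Fin r) (Fin s) ℝ)
    (A22 : Matrix (Fin s) (Fin s) ℝ) (B1 : Matrix (Fin r) (Fin m) ℝ)
    (hS : IsUnit Sm.det)
    (hA : Sm⁻¹ * A * Sm = fromBlocks A11 A12 0 A22)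
    (hB : Sm⁻¹ * B = Matrix.of (Sum.elim (fun i j => B1 i j) (fun _ _ => (0 : ℝ))))
    (hctrb : (ctrbMatrix r m A11 B1).rank = r) :
    (∃ K : Matrix (Fin m) (Fin r ⊕ Fin s) ℝ,
        ∀ μ ∈ spectrum ℂ ((A + B * K).map (algebraMap ℝ ℂ)), ‖μ‖ < 1) ↔
      (∀ μ ∈ spectrum ℂ (A22.map (algebraMap ℝ ℂ)), ‖μ‖ < 1) := by
  -- `hB` reads `Sm⁻¹ * B = fromRows B1 0` after unfolding `fromRows`.
  have hspec := spectrum_map_add_mul_of_conj_eq_fromBlocks (algebraMap ℝ ℂ) hS hA (B₁ := B1) hB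
  constructor
  · rintro ⟨K, hK⟩ μ hμ
    exact hK μ (by rw [hspec]; exact Or.inr hμ)
  · intro h22
    obtain ⟨K1, hK1⟩ := exists_isNilpotent_add_mul_of_rank_ctrbMatrix hctrb
    refine ⟨fromCols K1 (0 : Matrix (Fin m) (Fin s) ℝ) * Sm⁻¹, fun μ hμ => ?_⟩
    rw [hspec, nonsing_inv_mul_cancel_right _ _ hS, toCols₁_fromCols] at hμ
    rcases hμ with hμ | hμ
    · rw [spectrum.eq_zero_of_isNilpotent (hK1.map (algebraMap ℝ ℂ).mapMatrix) hμ]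
      norm_num
    · exact h22 μ hμ
end
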